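/- arXiv:1808.01013 — 4 statements merged into one kernel-verified Lean document; each statement's English description precedes it below -/
import Mathlib

section
/- Let α ∈ (0,1), β = 1−α, ρ > 0, n ≥ 1, λ : Fin n → ℝ with λ_j ≥ 0 for all j, Λ = Matrix.diagonal (fun j => (λ_j : ℂ)), and let W₂ ∈ Matrix (Fin n) (Fin n) ℂ be unitary (W₂ᴴ·W₂ = Iₙ) with |W₂ i j| = 1/√n for all i, j. Set M = W₂ᴴ·Λ·W₂. Then det(Iₙ + (α/β)·(Matrix.diagonal (fun i => (M i i) + 1/(β·ρ)))⁻¹·M) = Π_{j=1}^{n} (1 + α·ρ·n·λ_j/(n + (1−α)·ρ·Σ_i λ_i)). In particular, if exactly Nu of the λ_j are nonzero, the mutual information of the two-stage analog combining solution equals Σ_{k: λ_k ≠ 0} log₂(1 + αρ·n·λ_k/(n + (1−α)·ρ·Σ_i λ_i)). -/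
/-! Constant-modulus entries make every diagonal entry of `M = W₂ᴴ Λ W₂` equal to `(∑ λᵢ) / n`,
so the normalising diagonal matrix is a scalar `c` and the matrix in the determinant is
`1 + t • M` with `t = (α / β) / c`. As `W₂` is unitary, `1 + t • M = W₂ᴴ (1 + t Λ) W₂` has
determinant `∏ⱼ (1 + t λⱼ)`; the factors with `λⱼ = 0` contribute `log 1 = 0`. -/

open Matrix

theorem Matrix.conjTranspose_mul_diagonal_mul_apply_self {𝕜 m n : Type*} [RCLike 𝕜] [Fintype m]
    [DecidableEq m] (W : Matrix m n 𝕜) (d : m → 𝕜) (i : n) :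
    (Wᴴ * diagonal d * W) i i = ∑ k, ((‖W k i‖ ^ 2 : ℝ) : 𝕜) * d k := by
  rw [mul_apply]
  simp only [mul_diagonal, conjTranspose_apply]
  refine Finset.sum_congr rfl fun k _ => ?_
  rw [mul_right_comm, RCLike.star_def, RCLike.conj_mul]
  push_cast
  ring

theorem Matrix.det_one_add_smul_conjTranspose_mul_diagonal_mul {R n : Type*} [CommRing R]
    [StarRing R] [Fintype n] [DecidableEq n] {W : Matrix n n R} (hW : Wᴴ * W = 1)
    (t : R) (d : n → R) :
    det (1 + t • (Wᴴ * diagonal d * W)) = ∏ i, (1 + t * d i) := by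
  have hdiag : diagonal (fun i => 1 + t * d i) = 1 + t • diagonal d := by
    rw [← diagonal_one, ← diagonal_smul, ← diagonal_add]
    rfl
  have hconj : 1 + t • (Wᴴ * diagonal d * W) = Wᴴ * diagonal (fun i => 1 + t * d i) * W := by
    rw [hdiag, mul_add, add_mul, mul_one, hW, Matrix.mul_smul, Matrix.smul_mul]
  rw [hconj, det_mul_right_comm, hW, one_mul, det_diagonal]

theorem Matrix.inv_diagonal_const_mul {K n : Type*} [Field K] [Fintype n] [DecidableEq n]
    (c : K) (M : Matrix n n K) : (diagonal fun _ : n => c)⁻¹ * M = c⁻¹ • M := by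
  rcases eq_or_ne c 0 with rfl | hc
  · simp
  · rw [inv_eq_right_inv (B := diagonal fun _ => c⁻¹) (by simp [hc]), smul_eq_diagonal_mul]

theorem Real.logb_norm_prod_ofReal {ι : Type*} [Fintype ι] (b : ℝ) {f : ι → ℝ}
    (hf : ∀ i, 0 < f i) : logb b ‖∏ i, (f i : ℂ)‖ = ∑ i, logb b (f i) := by
  rw [← Complex.ofReal_prod, Complex.norm_real, Real.norm_of_nonneg
    (Finset.prod_nonneg fun i _ => (hf i).le), Real.logb_prod _ _ fun i _ => (hf i).ne']

/-- closed-form mutual information of the two-stage analog combining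
solution (equation (29) in Theorem 1). -/
theorem stmt_5 {n : ℕ} (hn : 1 ≤ n) (α β ρ : ℝ)
    (hα : α ∈ Set.Ioo (0 : ℝ) 1) (hβ : β = 1 - α) (hρ : 0 < ρ)
    (l : Fin n → ℝ) (hl : ∀ j, 0 ≤ l j)
    (W₂ : Matrix (Fin n) (Fin n) ℂ) (hW₂u : W₂ᴴ * W₂ = 1)
    (hW₂m : ∀ i j, ‖W₂ i j‖ = 1 / Real.sqrt n)
    (M : Matrix (Fin n) (Fin n) ℂ)
    (hM : M = W₂ᴴ * Matrix.diagonal (fun j => ((l j : ℝ) : ℂ)) * W₂) :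
    ((1 + ((α / β : ℝ) : ℂ) •
        ((Matrix.diagonal (fun i => M i i + 1 / ((β * ρ : ℝ) : ℂ)))⁻¹ * M)).det
      = ∏ j, (((1 + α * ρ * n * l j / (n + (1 - α) * ρ * ∑ i, l i) : ℝ)) : ℂ))
    ∧
    Real.logb 2 (‖(1 + ((α / β : ℝ) : ℂ) •
          ((Matrix.diagonal (fun i => M i i + 1 / ((β * ρ : ℝ) : ℂ)))⁻¹ * M)).det‖)
      = ∑ k ∈ Finset.univ.filter (fun k : Fin n => l k ≠ 0),
          Real.logb 2 (1 + α * ρ * n * l k / (n + (1 - α) * ρ * ∑ i, l i)) := by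
  obtain ⟨hα0, hα1⟩ := hα
  subst hβ
  set S := ∑ i, l i with hS_def
  have hS : 0 ≤ S := Finset.sum_nonneg fun i _ => hl i
  have hn0 : (0 : ℝ) < n := by exact_mod_cast hn
  have hD : 0 < n + (1 - α) * ρ * S :=
    add_pos_of_pos_of_nonneg hn0 (mul_nonneg (mul_nonneg (by linarith) hρ.le) hS)
  have hMdiag (i : Fin n) : M i i = ((S / n : ℝ) : ℂ) := by
    simp only [hM, conjTranspose_mul_diagonal_mul_apply_self, hW₂m, div_pow, one_pow,
      Real.sq_sqrt hn0.le, hS_def, Finset.sum_div]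
    push_cast
    exact Finset.sum_congr rfl fun j _ => by ring
  have hdet : det (1 + ((α / (1 - α) : ℝ) : ℂ) •
        ((diagonal fun i => M i i + 1 / (((1 - α) * ρ : ℝ) : ℂ))⁻¹ * M))
      = ∏ j, (((1 + α * ρ * n * l j / (n + (1 - α) * ρ * S) : ℝ)) : ℂ) := by
    simp only [hMdiag, inv_diagonal_const_mul, smul_smul]
    rw [hM, det_one_add_smul_conjTranspose_mul_diagonal_mul hW₂u]
    refine Finset.prod_congr rfl fun j _ => ?_
    have hβ0 : 1 - α ≠ 0 := by linarith
    have hscalar : α / (1 - α) * (S / n + 1 / ((1 - α) * ρ))⁻¹ * l j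
        = α * ρ * n * l j / (n + (1 - α) * ρ * S) := by
      field_simp
      ring
    rw [← hscalar]
    push_cast
    ring
  refine ⟨hdet, ?_⟩
  have hpos (j : Fin n) : 0 < 1 + α * ρ * n * l j / (n + (1 - α) * ρ * S) :=
    add_pos_of_pos_of_nonneg one_pos <| div_nonneg (mul_nonneg (by positivity) (hl j)) hD.le
  rw [hdet, Real.logb_norm_prod_ofReal 2 hpos]
  refine (Finset.sum_filter_of_ne fun k _ hk => ?_).symm
  rintro h0
  simp [h0] at hk
end

section
/- Let α ∈ (0,1), β = 1−α, ρ > 0, integers Nu ≥ 1, n ≥ Nu, and λ : Fin n → ℝ with λ_i ≥ 0 for all i and λ_i = 0 for i > Nu. Let Λ = Matrix.diagonal (fun i => (λ_i : ℂ)). Then (i) det(Iₙ + (α/β)·(Matrix.diagonal (fun i => λ_i + 1/(β·ρ)))⁻¹·Λ) = Π_{i=1}^{Nu} (1 + α·λ_i/(β·λ_i + 1/ρ)), and (ii) this product is strictly less than (1 + α/(1−α))^{Nu}. (Corollary 1: the conventional one-stage SVD combiner W_RF^cv yields C(W_RF^cv) = Σ_{i=1}^{Nu} log₂(1 + αλᵢ/(βλᵢ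 + 1/ρ)) < Nu·log₂(1 + α/(1−α)), so its mutual information is bounded and cannot achieve the optimal scaling law.) -/
open Matrix

/-- Corollary 1: the conventional one-stage SVD combiner yields a
bounded mutual information. -/
theorem stmt_7 {n Nu : ℕ} (hNu : 1 ≤ Nu) (hn : Nu ≤ n)
    (α β ρ : ℝ) (hα : α ∈ Set.Ioo (0 : ℝ) 1) (hβ : β = 1 - α) (hρ : 0 < ρ)
    (l : Fin n → ℝ) (hl : ∀ i, 0 ≤ l i)
    (hl0 : ∀ i : Fin n, Nu ≤ (i : ℕ) → l i = 0) :
    ((1 + ((α / β : ℝ) : ℂ) •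
        ((Matrix.diagonal (fun i => ((l i + 1 / (β * ρ) : ℝ) : ℂ)))⁻¹ *
          Matrix.diagonal (fun i => ((l i : ℝ) : ℂ)))).det
      = ((∏ i ∈ Finset.univ.filter (fun i : Fin n => (i : ℕ) < Nu),
            (1 + α * l i / (β * l i + 1 / ρ)) : ℝ) : ℂ))
    ∧
    (∏ i ∈ Finset.univ.filter (fun i : Fin n => (i : ℕ) < Nu),
        (1 + α * l i / (β * l i + 1 / ρ)))
      < (1 + α / (1 - α)) ^ Nu := by
  obtain ⟨hα0, hα1⟩ := hα
  have hβ0 : 0 < β := by rw [hβ]; linarith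
  have hβρ : 0 < β * ρ := mul_pos hβ0 hρ
  have hd : ∀ i : Fin n, (0 : ℝ) < l i + 1 / (β * ρ) := fun i => by
    have := hl i; positivity
  have hd2 : ∀ i : Fin n, (0 : ℝ) < β * l i + 1 / ρ := fun i => by
    have := hl i; positivity
  -- the key scalar identity
  have key : ∀ i : Fin n,
      1 + (α / β) * (l i + 1 / (β * ρ))⁻¹ * l i
        = 1 + α * l i / (β * l i + 1 / ρ) := by
    intro i
    have h1 := (hd i).ne'
    have h2 := (hd2 i).ne'
    congr 1
    rw [eq_div_iff h2]
    have e2 : β * l i + 1 / ρ = β * (l i + 1 / (β * ρ)) := by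
      field_simp
    rw [e2]
    have h1' : (l i + 1 / (β * ρ))⁻¹ * (l i + 1 / (β * ρ)) = 1 := inv_mul_cancel₀ h1
    have hb' : β⁻¹ * β = 1 := inv_mul_cancel₀ hβ0.ne'
    calc α / β * (l i + 1 / (β * ρ))⁻¹ * l i * (β * (l i + 1 / (β * ρ)))
        = α * l i * (((l i + 1 / (β * ρ))⁻¹ * (l i + 1 / (β * ρ))) * (β⁻¹ * β)) := by
          ring
      _ = α * l i := by rw [h1', hb']; ring
  have hcard : (Finset.univ.filter (fun i : Fin n => (i : ℕ) < Nu)).card = Nu := by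
    rcases eq_or_lt_of_le hn with h | h
    · subst h
      rw [Finset.filter_true_of_mem (fun i _ => i.isLt)]
      simp
    · have heq : Finset.univ.filter (fun i : Fin n => (i : ℕ) < Nu)
          = Finset.Iio (⟨Nu, h⟩ : Fin n) := by
        ext i; simp [Fin.lt_def]
      rw [heq, Fin.card_Iio]
  constructor
  · -- determinant computation
    have hinv : (Matrix.diagonal (fun i => ((l i + 1 / (β * ρ) : ℝ) : ℂ)))⁻¹
        = Matrix.diagonal (fun i => (((l i + 1 / (β * ρ) : ℝ) : ℂ))⁻¹) := by
      apply Matrix.inv_eq_right_inv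
      rw [Matrix.diagonal_mul_diagonal, ← Matrix.diagonal_one]
      exact congrArg Matrix.diagonal
        (funext fun i => mul_inv_cancel₀ (by exact_mod_cast (hd i).ne'))
    rw [hinv, Matrix.diagonal_mul_diagonal]
    have hsmul : ((α / β : ℝ) : ℂ) •
        Matrix.diagonal (fun i => (((l i + 1 / (β * ρ) : ℝ) : ℂ))⁻¹ * ((l i : ℝ) : ℂ))
        = Matrix.diagonal (fun i =>
            ((α / β : ℝ) : ℂ) * ((((l i + 1 / (β * ρ) : ℝ) : ℂ))⁻¹ * ((l i : ℝ) : ℂ))) := by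
      rw [← Matrix.diagonal_smul]
      congr 1
    rw [hsmul]
    have hone : (1 : Matrix (Fin n) (Fin n) ℂ) = Matrix.diagonal (fun _ => (1 : ℂ)) := by
      simp [Matrix.diagonal_one]
    rw [hone, Matrix.diagonal_add, Matrix.det_diagonal]
    have hfac : ∀ i : Fin n,
        (1 : ℂ) + ((α / β : ℝ) : ℂ) * ((((l i + 1 / (β * ρ) : ℝ) : ℂ))⁻¹ * ((l i : ℝ) : ℂ))
          = ((1 + α * l i / (β * l i + 1 / ρ) : ℝ) : ℂ) := by
      intro i
      rw [← key i]
      push_cast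
      ring
    rw [Finset.prod_congr rfl (fun i _ => hfac i)]
    rw [← Complex.ofReal_prod]
    congr 1
    symm
    apply Finset.prod_subset (Finset.filter_subset _ _)
    intro i _ hi
    simp only [Finset.mem_filter, Finset.mem_univ, true_and, not_lt] at hi
    rw [hl0 i hi]
    simp
  · -- strict inequality
    have hlt : ∀ i ∈ Finset.univ.filter (fun i : Fin n => (i : ℕ) < Nu),
        1 + α * l i / (β * l i + 1 / ρ) < 1 + α / (1 - α) := by
      intro i _
      rw [← hβ]
      have h2 := hd2 i
      have hkey : α * l i / (β * l i + 1 / ρ) < α / β := by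
        rw [div_lt_div_iff₀ h2 hβ0]
        nlinarith [mul_pos hα0 (one_div_pos.mpr hρ), hl i]
      linarith
    have hpos : ∀ i ∈ Finset.univ.filter (fun i : Fin n => (i : ℕ) < Nu),
        (0 : ℝ) < 1 + α * l i / (β * l i + 1 / ρ) := by
      intro i _
      have := hl i
      have h2 := hd2 i
      positivity
    have hne : (Finset.univ.filter (fun i : Fin n => (i : ℕ) < Nu)).Nonempty := by
      rw [← Finset.card_pos, hcard]; exact hNu
    calc (∏ i ∈ Finset.univ.filter (fun i : Fin n => (i : ℕ) < Nu),
            (1 + α * l i / (β * l i + 1 / ρ)))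
        < ∏ _i ∈ Finset.univ.filter (fun i : Fin n => (i : ℕ) < Nu),
            (1 + α / (1 - α)) :=
          Finset.prod_lt_prod_of_nonempty hpos hlt hne
      _ = (1 + α / (1 - α)) ^ Nu := by rw [Finset.prod_const, hcard]
end

section
/- Let n ≥ 1, 1 ≤ L ≤ n, Nr ≥ 1, Nu ≥ 2 be integers. Let S ⊆ Fin n and, for u = 1, …, Nu−1, S_u ⊆ Fin n, each of cardinality L. Let (ξ_ℓ) and (ξ_ℓ^{(u)}) for u = 1,…,Nu−1 be i.i.d. standard complex Gaussian families, all Nu families mutually independent. Define h_ℓ = √(Nr/L)·ξ_ℓ·1{ℓ∈S} and h^{(u)}_ℓ = √(Nr/L)·ξ^{(u)}_ℓ·1{ℓ∈S_u}. Let W ∈ Matrix (Fin n) (Fin n) ℂ satisfy |W ℓ i| = 1/√n for all ℓ, i. Then E[ Σ_{i ∈ Fin n} |Σ_ℓ conj(h_ℓ)·(W ℓ i)|² · Σ_{u=1}^{Nu−1} |Σ_ℓ conj(h^{(u)}_ℓ)·(W ℓ i)|² ] = Nr²·(Nu−1)/n. (Lemma 2: the cross quantization noise variance for two-stage analog combining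 with MRC is E[Ψ_k^cross] = N_r²·(N_u−1)/N_RF; the value does not depend on the supports.) -/
/-!
The real and imaginary parts `X_p` of all Gaussian entries are independent, centred and of
variance `1/2`. The real and imaginary parts of a combiner output `∑ ℓ, a ℓ * ξ ℓ` are linear
combinations of the `X_p`, so `E ‖∑ ℓ, a ℓ * ξ ℓ‖² = ∑ ℓ, ‖a ℓ‖²`; for the MRC coefficients seen
through a DFT column this is `L · (Nr / L) · (1 / n) = Nr / n`. The outputs for two distinct users
are functions of disjoint blocks of the independent family, hence independent, so each of the
`n (Nu - 1)` terms of `Ψ` has expectation `(Nr / n)²`.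
-/

open MeasureTheory ProbabilityTheory

/-- Real (`b = true`) or imaginary (`b = false`) part of a complex number. -/
noncomputable def cpart (b : Bool) (z : ℂ) : ℝ := if b then z.re else z.im

/-- A family of complex random variables is i.i.d. standard complex Gaussian if all
of its real and imaginary parts are mutually independent, each with law
`gaussianReal 0 (1/2)`. -/
def IsStdCGaussianFamily {Ω : Type*} [MeasurableSpace Ω] (μ : Measure Ω)
    {ι : Type*} (ξ : ι → Ω → ℂ) : Prop :=
  iIndepFun (m := fun _ : ι × Bool => (inferInstance : MeasurableSpace ℝ))
      (fun p ω => cpart p.2 (ξ p.1 ω)) μ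
  ∧ ∀ p : ι × Bool,
      Measure.map (fun ω => cpart p.2 (ξ p.1 ω)) μ = gaussianReal 0 (1 / 2)

section SecondMoment

variable {Ω κ : Type*} [MeasurableSpace Ω] {μ : Measure Ω} [IsFiniteMeasure μ]
  {X : κ → Ω → ℝ} {v : ℝ}

theorem integral_sq_sum_mul_of_indepFun (hX : ∀ k, MemLp (X k) 2 μ) (hmean : ∀ k, μ[X k] = 0)
    (hvar : ∀ k, Var[X k; μ] = v) (hind : Pairwise fun k j => X k ⟂ᵢ[μ] X j)
    (s : Finset κ) (c : κ → ℝ) :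
    ∫ ω, (∑ k ∈ s, c k * X k ω) ^ 2 ∂μ = v * ∑ k ∈ s, c k ^ 2 := by
  have hcX : ∀ k, MemLp (fun ω => c k * X k ω) 2 μ := fun k => (hX k).const_mul (c k)
  have hsum : (fun ω => ∑ k ∈ s, c k * X k ω) = ∑ k ∈ s, fun ω => c k * X k ω := by
    ext ω; simp
  rw [← variance_of_integral_eq_zero, hsum, IndepFun.variance_sum (fun k _ => hcX k)]
  · simp_rw [variance_const_mul, hvar, Finset.mul_sum, mul_comm]
  · exact fun k _ j _ hkj =>
      (hind hkj).comp (measurable_const_mul (c k)) (measurable_const_mul (c j))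
  · rw [hsum]
    exact (memLp_finsetSum' s fun k _ => hcX k).aestronglyMeasurable.aemeasurable
  · rw [integral_finsetSum s fun k _ => (hcX k).integrable one_le_two]
    simp [integral_const_mul, hmean]

end SecondMoment

section Cpart

variable {ι : Type*} [Fintype ι]

theorem re_sum_mul_eq_sum_cpart (a z : ι → ℂ) :
    (∑ ℓ, a ℓ * z ℓ).re =
      ∑ p : ι × Bool, (if p.2 then (a p.1).re else -(a p.1).im) * cpart p.2 (z p.1) := by
  simp [Complex.re_sum, Fintype.sum_prod_type, cpart, Complex.mul_re, sub_eq_add_neg]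

theorem im_sum_mul_eq_sum_cpart (a z : ι → ℂ) :
    (∑ ℓ, a ℓ * z ℓ).im =
      ∑ p : ι × Bool, (if p.2 then (a p.1).im else (a p.1).re) * cpart p.2 (z p.1) := by
  simp [Complex.im_sum, Fintype.sum_prod_type, cpart, Complex.mul_im, add_comm]

theorem norm_sq_sum_mul_eq_sum_cpart (a z : ι → ℂ) :
    ‖∑ ℓ, a ℓ * z ℓ‖ ^ 2 =
      (∑ p : ι × Bool, (if p.2 then (a p.1).re else -(a p.1).im) * cpart p.2 (z p.1)) ^ 2 +
      (∑ p : ι × Bool, (if p.2 then (a p.1).im else (a p.1).re) * cpart p.2 (z p.1)) ^ 2 := by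
  rw [Complex.sq_norm, Complex.normSq_apply, re_sum_mul_eq_sum_cpart, im_sum_mul_eq_sum_cpart,
    sq, sq]

end Cpart

namespace IsStdCGaussianFamily

variable {Ω : Type*} [MeasurableSpace Ω] {μ : Measure Ω}

section Single

variable {ι : Type*} {ξ : ι → Ω → ℂ}

theorem comp_injective {κ : Type*} (hξ : IsStdCGaussianFamily μ ξ) {g : κ → ι}
    (hg : g.Injective) : IsStdCGaussianFamily μ (fun k => ξ (g k)) :=
  ⟨hξ.1.precomp (g := Prod.map g id) (hg.prodMap Function.injective_id),
    fun p => hξ.2 (g p.1, p.2)⟩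

theorem hasLaw (hξ : IsStdCGaussianFamily μ ξ) (p : ι × Bool) :
    HasLaw (fun ω => cpart p.2 (ξ p.1 ω)) (gaussianReal 0 (1 / 2)) μ where
  aemeasurable := aemeasurable_of_map_neZero (by rw [hξ.2 p]; infer_instance)
  map_eq := hξ.2 p

theorem memLp_cpart (hξ : IsStdCGaussianFamily μ ξ) (p : ι × Bool) :
    MemLp (fun ω => cpart p.2 (ξ p.1 ω)) 2 μ :=
  (hξ.hasLaw p).hasGaussianLaw.memLp_two

theorem integral_cpart (hξ : IsStdCGaussianFamily μ ξ) (p : ι × Bool) :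
    μ[fun ω => cpart p.2 (ξ p.1 ω)] = 0 := by
  rw [(hξ.hasLaw p).integral_eq, integral_id_gaussianReal]

theorem variance_cpart (hξ : IsStdCGaussianFamily μ ξ) (p : ι × Bool) :
    Var[fun ω => cpart p.2 (ξ p.1 ω); μ] = 1 / 2 := by
  rw [(hξ.hasLaw p).variance_eq, variance_id_gaussianReal]
  norm_num

theorem integral_sq_sum_mul_cpart [Fintype ι] (hξ : IsStdCGaussianFamily μ ξ)
    (c : ι × Bool → ℝ) :
    ∫ ω, (∑ p, c p * cpart p.2 (ξ p.1 ω)) ^ 2 ∂μ = (∑ p, c p ^ 2) / 2 := by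
  have := hξ.1.isProbabilityMeasure
  rw [integral_sq_sum_mul_of_indepFun hξ.memLp_cpart hξ.integral_cpart hξ.variance_cpart
    (fun _ _ h => hξ.1.indepFun h)]
  ring

theorem memLp_sum_mul_cpart [Fintype ι] (hξ : IsStdCGaussianFamily μ ξ) (c : ι × Bool → ℝ) :
    MemLp (fun ω => ∑ p, c p * cpart p.2 (ξ p.1 ω)) 2 μ :=
  memLp_finsetSum _ fun p _ => (hξ.memLp_cpart p).const_mul (c p)

theorem integrable_norm_sq_sum_mul [Fintype ι] (hξ : IsStdCGaussianFamily μ ξ) (a : ι → ℂ) :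
    Integrable (fun ω => ‖∑ ℓ, a ℓ * ξ ℓ ω‖ ^ 2) μ := by
  have := hξ.1.isProbabilityMeasure
  simp_rw [norm_sq_sum_mul_eq_sum_cpart]
  exact (hξ.memLp_sum_mul_cpart _).integrable_sq.add (hξ.memLp_sum_mul_cpart _).integrable_sq

theorem integral_norm_sq_sum_mul [Fintype ι] (hξ : IsStdCGaussianFamily μ ξ) (a : ι → ℂ) :
    ∫ ω, ‖∑ ℓ, a ℓ * ξ ℓ ω‖ ^ 2 ∂μ = ∑ ℓ, ‖a ℓ‖ ^ 2 := by
  have := hξ.1.isProbabilityMeasure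
  simp_rw [norm_sq_sum_mul_eq_sum_cpart]
  rw [integral_add (hξ.memLp_sum_mul_cpart _).integrable_sq
      (hξ.memLp_sum_mul_cpart _).integrable_sq,
    hξ.integral_sq_sum_mul_cpart, hξ.integral_sq_sum_mul_cpart]
  simp only [Fintype.sum_prod_type, Fintype.sum_bool, ite_true, ite_false, Bool.false_eq_true,
    neg_sq, Complex.sq_norm, Complex.normSq_apply, ← sq, add_comm ((a _).im ^ 2)]
  ring

end Single

section Blocks

variable {α β : Type*} [Fintype β] {ξ : α → β → Ω → ℂ}

theorem indepFun_block (hξ : IsStdCGaussianFamily μ (fun p : α × β => ξ p.1 p.2))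
    {a a' : α} (haa' : a ≠ a') : (fun ω b => ξ a b ω) ⟂ᵢ[μ] (fun ω b => ξ a' b ω) := by
  classical
  let block (a : α) : Finset ((α × β) × Bool) :=
    Finset.univ.image fun q : β × Bool => ((a, q.1), q.2)
  have hmem (a : α) (b : β) (t : Bool) : ((a, b), t) ∈ block a :=
    Finset.mem_image_of_mem _ (Finset.mem_univ (b, t))
  have hdisj : Disjoint (block a) (block a') := by
    simp [block, Finset.disjoint_left, haa'.symm]
  let assemble (a : α) (v : block a → ℝ) (b : β) : ℂ :=
    v ⟨_, hmem a b true⟩ + v ⟨_, hmem a b false⟩ * Complex.I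
  have hassemble (a : α) : Measurable (assemble a) := by
    fun_prop
  convert (hξ.1.indepFun_finset₀ _ _ hdisj fun p => (hξ.hasLaw p).aemeasurable).comp
    (hassemble a) (hassemble a') using 1 <;>
  · ext ω b
    simp [assemble, cpart, Complex.re_add_im]

theorem indepFun_norm_sq_sum_mul
    (hξ : IsStdCGaussianFamily μ (fun p : α × β => ξ p.1 p.2))
    {a a' : α} (haa' : a ≠ a') (c c' : β → ℂ) :
    (fun ω => ‖∑ b, c b * ξ a b ω‖ ^ 2) ⟂ᵢ[μ] (fun ω => ‖∑ b, c' b * ξ a' b ω‖ ^ 2) :=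
  (hξ.indepFun_block haa').comp (φ := fun z : β → ℂ => ‖∑ b, c b * z b‖ ^ 2)
    (ψ := fun z : β → ℂ => ‖∑ b, c' b * z b‖ ^ 2) (by fun_prop) (by fun_prop)

theorem integrable_norm_sq_mul_norm_sq
    (hξ : IsStdCGaussianFamily μ (fun p : α × β => ξ p.1 p.2))
    {a a' : α} (haa' : a ≠ a') (c c' : β → ℂ) :
    Integrable (fun ω => ‖∑ b, c b * ξ a b ω‖ ^ 2 * ‖∑ b, c' b * ξ a' b ω‖ ^ 2) μ :=
  (hξ.indepFun_norm_sq_sum_mul haa' c c').integrable_mul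
    ((hξ.comp_injective (Prod.mk_right_injective a)).integrable_norm_sq_sum_mul c)
    ((hξ.comp_injective (Prod.mk_right_injective a')).integrable_norm_sq_sum_mul c')

theorem integral_norm_sq_mul_norm_sq
    (hξ : IsStdCGaussianFamily μ (fun p : α × β => ξ p.1 p.2))
    {a a' : α} (haa' : a ≠ a') (c c' : β → ℂ) :
    ∫ ω, ‖∑ b, c b * ξ a b ω‖ ^ 2 * ‖∑ b, c' b * ξ a' b ω‖ ^ 2 ∂μ =
      (∑ b, ‖c b‖ ^ 2) * ∑ b, ‖c' b‖ ^ 2 := by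
  have hξa := hξ.comp_injective (Prod.mk_right_injective a)
  have hξa' := hξ.comp_injective (Prod.mk_right_injective a')
  rw [← hξa.integral_norm_sq_sum_mul, ← hξa'.integral_norm_sq_sum_mul]
  exact (hξ.indepFun_norm_sq_sum_mul haa' c c').integral_mul_eq_mul_integral
    (hξa.integrable_norm_sq_sum_mul c).aestronglyMeasurable
    (hξa'.integrable_norm_sq_sum_mul c').aestronglyMeasurable

end Blocks

end IsStdCGaussianFamily

section Combiner

variable {ι : Type*} [Fintype ι]

theorem norm_sum_conj_mul_comm (v w : ι → ℂ) :
    ‖∑ ℓ, starRingEnd ℂ (v ℓ) * w ℓ‖ = ‖∑ ℓ, starRingEnd ℂ (w ℓ) * v ℓ‖ := by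
  rw [← Complex.norm_conj, map_sum]
  simp [mul_comm]

theorem sum_norm_sq_ite_mul [DecidableEq ι] (T : Finset ι) (c : ℂ) (w : ι → ℂ) {r : ℝ}
    (hw : ∀ ℓ, ‖w ℓ‖ = r) :
    ∑ ℓ, ‖(if ℓ ∈ T then c else 0) * w ℓ‖ ^ 2 = T.card * (‖c‖ * r) ^ 2 := by
  simp [ite_mul, apply_ite, hw, Finset.sum_ite_mem]

theorem norm_sum_conj_ite_mul [DecidableEq ι] (T : Finset ι) (c : ℝ) (z w : ι → ℂ) :
    ‖∑ ℓ, starRingEnd ℂ (if ℓ ∈ T then (c : ℂ) * z ℓ else 0) * w ℓ‖ =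
      ‖∑ ℓ, ((if ℓ ∈ T then (c : ℂ) else 0) * starRingEnd ℂ (w ℓ)) * z ℓ‖ := by
  rw [norm_sum_conj_mul_comm]
  congr 2 with ℓ
  split_ifs <;> simp [mul_assoc, mul_left_comm]

end Combiner

theorem stmt_14_general {n : ℕ} (L Nr Nu : ℕ) (hL1 : 1 ≤ L)
    (hNu : 2 ≤ Nu)
    (S : Finset (Fin n)) (hS : S.card = L)
    (S' : Fin (Nu - 1) → Finset (Fin n)) (hS' : ∀ u, (S' u).card = L)
    {Ω : Type*} [MeasurableSpace Ω] (μ : Measure Ω)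
    (ξ : Fin n → Ω → ℂ) (ξ' : Fin (Nu - 1) → Fin n → Ω → ℂ)
    (hgauss : IsStdCGaussianFamily μ
      (fun p : Option (Fin (Nu - 1)) × Fin n =>
        Option.elim p.1 (ξ p.2) (fun u => ξ' u p.2)))
    (W : Matrix (Fin n) (Fin n) ℂ)
    (hW : ∀ ℓ i, ‖W ℓ i‖ = 1 / Real.sqrt n)
    (h : Ω → Fin n → ℂ) (h' : Fin (Nu - 1) → Ω → Fin n → ℂ)
    (hdef : ∀ ω ℓ, h ω ℓ =
      if ℓ ∈ S then ((Real.sqrt ((Nr : ℝ) / L) : ℝ) : ℂ) * ξ ℓ ω else 0)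
    (hdef' : ∀ u ω ℓ, h' u ω ℓ =
      if ℓ ∈ S' u then ((Real.sqrt ((Nr : ℝ) / L) : ℝ) : ℂ) * ξ' u ℓ ω else 0) :
    ∫ ω, ∑ i,
        ‖∑ ℓ, (starRingEnd ℂ) (h ω ℓ) * W ℓ i‖ ^ 2 *
          ∑ u : Fin (Nu - 1),
            ‖∑ ℓ, (starRingEnd ℂ) (h' u ω ℓ) * W ℓ i‖ ^ 2 ∂μ
      = (Nr : ℝ) ^ 2 * ((Nu : ℝ) - 1) / n := by
  let coeff (T : Finset (Fin n)) (i ℓ : Fin n) : ℂ :=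
    (if ℓ ∈ T then ((√(Nr / L : ℝ) : ℝ) : ℂ) else 0) * starRingEnd ℂ (W ℓ i)
  let Ξ (o : Option (Fin (Nu - 1))) (ℓ : Fin n) : Ω → ℂ :=
    Option.elim o (ξ ℓ) (fun u => ξ' u ℓ)
  have hcoeff {T : Finset (Fin n)} (hT : T.card = L) (i : Fin n) :
      ∑ ℓ, ‖coeff T i ℓ‖ ^ 2 = Nr / n := by
    rw [sum_norm_sq_ite_mul T _ _ (r := 1 / √n) (by simp [hW]), hT, mul_pow, div_pow,
      Complex.norm_real, Real.norm_eq_abs, sq_abs, Real.sq_sqrt (by positivity),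
      Real.sq_sqrt (by positivity)]
    field_simp
  have hint (i : Fin n) (u : Fin (Nu - 1)) : Integrable (fun ω =>
      ‖∑ ℓ, coeff S i ℓ * ξ ℓ ω‖ ^ 2 * ‖∑ ℓ, coeff (S' u) i ℓ * ξ' u ℓ ω‖ ^ 2) μ :=
    hgauss.integrable_norm_sq_mul_norm_sq (ξ := Ξ) (Option.some_ne_none u).symm _ _
  have hpair (i : Fin n) (u : Fin (Nu - 1)) : ∫ ω,
      ‖∑ ℓ, coeff S i ℓ * ξ ℓ ω‖ ^ 2 * ‖∑ ℓ, coeff (S' u) i ℓ * ξ' u ℓ ω‖ ^ 2 ∂μ =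
        Nr / n * (Nr / n) :=
    (hgauss.integral_norm_sq_mul_norm_sq (ξ := Ξ) (Option.some_ne_none u).symm _ _).trans
      (by rw [hcoeff hS, hcoeff (hS' u)])
  calc _ = ∫ ω, ∑ i, ∑ u : Fin (Nu - 1),
        ‖∑ ℓ, coeff S i ℓ * ξ ℓ ω‖ ^ 2 * ‖∑ ℓ, coeff (S' u) i ℓ * ξ' u ℓ ω‖ ^ 2 ∂μ := by
        simp_rw [hdef, hdef', norm_sum_conj_ite_mul, Finset.mul_sum]
        rfl
    _ = ∑ _i : Fin n, ∑ _u : Fin (Nu - 1), (Nr / n * (Nr / n) : ℝ) := by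
        rw [integral_finsetSum _ fun i _ => integrable_finsetSum _ fun u _ => hint i u]
        refine Finset.sum_congr rfl fun i _ => ?_
        rw [integral_finsetSum _ fun u _ => hint i u]
        exact Finset.sum_congr rfl fun u _ => hpair i u
    _ = (Nr : ℝ) ^ 2 * ((Nu : ℝ) - 1) / n := by
        simp only [Finset.sum_const, Finset.card_univ, Fintype.card_fin, nsmul_eq_mul,
          Nat.cast_sub (by omega : 1 ≤ Nu), Nat.cast_one]
        rcases eq_or_ne (n : ℝ) 0 with hn | hn
        · simp [hn]
        · field_simp

/-- Lemma 2: the cross quantization noise variance for two-stage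
analog combining with MRC is `E[Ψ_k^cross] = Nr²(Nu−1)/n`.  The `Nu` Gaussian
families (that of the associated user and of the `Nu − 1` other users) are jointly
i.i.d. standard complex Gaussian, hence mutually independent. -/
theorem stmt_14 {n : ℕ} (hn : 1 ≤ n) (L Nr Nu : ℕ) (hL1 : 1 ≤ L) (hLn : L ≤ n)
    (hNr : 1 ≤ Nr) (hNu : 2 ≤ Nu)
    (S : Finset (Fin n)) (hS : S.card = L)
    (S' : Fin (Nu - 1) → Finset (Fin n)) (hS' : ∀ u, (S' u).card = L)
    {Ω : Type*} [MeasurableSpace Ω] (μ : Measure Ω) [IsProbabilityMeasure μ]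
    (ξ : Fin n → Ω → ℂ) (ξ' : Fin (Nu - 1) → Fin n → Ω → ℂ)
    (hgauss : IsStdCGaussianFamily μ
      (fun p : Option (Fin (Nu - 1)) × Fin n =>
        Option.elim p.1 (ξ p.2) (fun u => ξ' u p.2)))
    (W : Matrix (Fin n) (Fin n) ℂ)
    (hW : ∀ ℓ i, ‖W ℓ i‖ = 1 / Real.sqrt n)
    (h : Ω → Fin n → ℂ) (h' : Fin (Nu - 1) → Ω → Fin n → ℂ)
    (hdef : ∀ ω ℓ, h ω ℓ =
      if ℓ ∈ S then ((Real.sqrt ((Nr : ℝ) / L) : ℝ) : ℂ) * ξ ℓ ω else 0)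
    (hdef' : ∀ u ω ℓ, h' u ω ℓ =
      if ℓ ∈ S' u then ((Real.sqrt ((Nr : ℝ) / L) : ℝ) : ℂ) * ξ' u ℓ ω else 0) :
    ∫ ω, ∑ i,
        ‖∑ ℓ, (starRingEnd ℂ) (h ω ℓ) * W ℓ i‖ ^ 2 *
          ∑ u : Fin (Nu - 1),
            ‖∑ ℓ, (starRingEnd ℂ) (h' u ω ℓ) * W ℓ i‖ ^ 2 ∂μ
      = (Nr : ℝ) ^ 2 * ((Nu : ℝ) - 1) / n :=
  stmt_14_general L Nr Nu hL1 hNu S hS S' hS' μ ξ ξ' hgauss W hW h h' hdef hdef'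
end

section
/- Let α ∈ (0,1), ρ > 0, κ > 0, and integers Nu ≥ 1, L ≥ 1, Nr ≥ 1. Then for every real n > 0 (representing the number of RF chains N_RF), ρ·α·n·(1 + 1/L) / (κ + ρ·(Nu − 1) + 2·ρ·(1−α)·n/L) ≤ α·(L + 1)/(2·(1−α)), and consequently the one-stage ergodic rate approximation Nu·log₂(1 + ραn(1+1/L)/(κ + ρ(Nu−1) + 2ρ(1−α)n/L)) is bounded above by Nu·log₂(1 + α(L+1)/(2(1−α))) uniformly in n. -/
/-- Remark 4: the one-stage MRC ergodic rate approximation is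
uniformly bounded in the number of RF chains `n`, hence cannot achieve the
optimal scaling law. -/
theorem stmt_19 (α ρ κ : ℝ) (hα : α ∈ Set.Ioo (0 : ℝ) 1) (hρ : 0 < ρ) (hκ : 0 < κ)
    (Nu L Nr : ℕ) (hNu : 1 ≤ Nu) (hL : 1 ≤ L) (hNr : 1 ≤ Nr) :
    ∀ n : ℝ, 0 < n →
      (ρ * α * n * (1 + 1 / L) / (κ + ρ * ((Nu : ℝ) - 1) + 2 * ρ * (1 - α) * n / L)
          ≤ α * ((L : ℝ) + 1) / (2 * (1 - α)))
      ∧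
      (Nu : ℝ) * Real.logb 2 (1 +
          ρ * α * n * (1 + 1 / L) /
            (κ + ρ * ((Nu : ℝ) - 1) + 2 * ρ * (1 - α) * n / L))
        ≤ (Nu : ℝ) * Real.logb 2 (1 + α * ((L : ℝ) + 1) / (2 * (1 - α))) := by
  intro n hn
  obtain ⟨hα0, hα1⟩ := hα
  have hL0 : (0 : ℝ) < L := by exact_mod_cast hL
  have h1α : (0 : ℝ) < 1 - α := by linarith
  have hNu1 : (0 : ℝ) ≤ (Nu : ℝ) - 1 := by
    have : (1 : ℝ) ≤ Nu := by exact_mod_cast hNu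
    linarith
  have hQ : 0 < 2 * ρ * (1 - α) * n / L := by positivity
  have hD : 0 < κ + ρ * ((Nu : ℝ) - 1) + 2 * ρ * (1 - α) * n / L := by
    have : 0 ≤ ρ * ((Nu : ℝ) - 1) := by positivity
    linarith
  have hnum : 0 ≤ ρ * α * n * (1 + 1 / L) := by positivity
  have key : ρ * α * n * (1 + 1 / L) / (κ + ρ * ((Nu : ℝ) - 1) + 2 * ρ * (1 - α) * n / L)
      ≤ α * ((L : ℝ) + 1) / (2 * (1 - α)) := by
    rw [div_le_div_iff₀ hD (by positivity)]
    have h : ρ * α * n * (1 + 1 / L) * (2 * (1 - α))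
        ≤ α * ((L : ℝ) + 1) * (2 * ρ * (1 - α) * n / L) := by
      have : (1 + 1 / (L:ℝ)) = ((L:ℝ) + 1) / L := by field_simp
      rw [this]
      apply le_of_eq
      field_simp
    have h2 : 0 ≤ α * ((L : ℝ) + 1) * (κ + ρ * ((Nu : ℝ) - 1)) := by positivity
    nlinarith [h2]
  refine ⟨key, ?_⟩
  have hmono : Real.logb 2 (1 +
      ρ * α * n * (1 + 1 / L) / (κ + ρ * ((Nu : ℝ) - 1) + 2 * ρ * (1 - α) * n / L))
      ≤ Real.logb 2 (1 + α * ((L : ℝ) + 1) / (2 * (1 - α))) := by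
    have h1 : (0:ℝ) < 1 + ρ * α * n * (1 + 1 / L) / (κ + ρ * ((Nu : ℝ) - 1) + 2 * ρ * (1 - α) * n / L) := by positivity
    exact Real.logb_le_logb_of_le (by norm_num) h1 (by linarith)
  have hNu0 : (0 : ℝ) ≤ Nu := by positivity
  exact mul_le_mul_of_nonneg_left hmono hNu0
end
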